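/- Let π(a,b) = (b,a) be the reflection across the line x = y in ℝ². Let σ be a triangle with vertices P₁, P₂ on one open side of the line (say first coordinate > second coordinate for P₁, P₂) and Q a vertex with π(Q) ≠ P₁. If Q lies strictly on the other side of the line, then the interiors of σ and π(σ) intersect. -/
import Mathlib

/-- The reflection of the real plane across the line `{x = y}`. -/
def refl2 (p : ℝ × ℝ) : ℝ × ℝ := (p.2, p.1)

/-- If a nondegenerate triangle `σ = conv{P₁, P₂, Q}` has `P₁, P₂` strictly on one side
of the line `{x = y}` and `Q` strictly on the other side, with `π(Q) ≠ P₁`, then the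
interiors of `σ` and of its mirror image `π(σ)` intersect. -/
theorem interiors_of_mirror_triangles_intersect (P₁ P₂ Q : ℝ × ℝ)
    (hindep : AffineIndependent ℝ ![P₁, P₂, Q])
    (hP₁ : P₁.2 < P₁.1) (hP₂ : P₂.2 < P₂.1) (hQ : Q.1 < Q.2)
    (hne : refl2 Q ≠ P₁) :
    (interior (convexHull ℝ ({P₁, P₂, Q} : Set (ℝ × ℝ))) ∩
      interior (convexHull ℝ ({refl2 P₁, refl2 P₂, refl2 Q} : Set (ℝ × ℝ)))).Nonempty := by
  classical
  -- signed distances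
  set a : ℝ := P₁.1 - P₁.2 with ha
  set b : ℝ := P₂.1 - P₂.2 with hb
  set m : ℝ := Q.1 - Q.2 with hm
  have ha0 : 0 < a := by simp [ha]; linarith
  have hb0 : 0 < b := by simp [hb]; linarith
  have hm0 : m < 0 := by simp [hm]; linarith
  set s : ℝ := a + b - 2 * m with hs
  have hs0 : 0 < s := by linarith
  -- weights
  set w : Fin 3 → ℝ := ![-m / s, -m / s, (a + b) / s] with hw
  have hwsum : (Finset.univ : Finset (Fin 3)).sum w = 1 := by
    simp [hw, Fin.sum_univ_three]
    field_simp
    ring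
  have hwpos : ∀ i, 0 < w i := by
    intro i
    fin_cases i <;> simp only [hw, Matrix.cons_val_zero, Matrix.cons_val_one,
      Matrix.head_cons, Matrix.cons_val_two, Matrix.tail_cons] <;>
      exact div_pos (by linarith) hs0
  -- the point
  set p : Fin 3 → ℝ × ℝ := ![P₁, P₂, Q] with hp
  set x : ℝ × ℝ := (Finset.univ : Finset (Fin 3)).affineCombination ℝ p w with hx
  have hxlin : x = ∑ i, w i • p i := by
    rw [hx, Finset.affineCombination_eq_linear_combination _ _ _ hwsum]
  -- x lies on the diagonal
  have hxdiag : x.1 = x.2 := by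
    have hsne : s ≠ 0 := ne_of_gt hs0
    have h1 : x.1 = ∑ i, w i * (p i).1 := by
      rw [hxlin, Prod.fst_sum]
      exact Finset.sum_congr rfl fun i _ => rfl
    have h2 : x.2 = ∑ i, w i * (p i).2 := by
      rw [hxlin, Prod.snd_sum]
      exact Finset.sum_congr rfl fun i _ => rfl
    rw [h1, h2, Fin.sum_univ_three, Fin.sum_univ_three]
    simp only [hw, hp, Matrix.cons_val_zero, Matrix.cons_val_one, Matrix.head_cons,
      Matrix.cons_val_two, Matrix.tail_cons]
    rw [ha, hb, hm]
    field_simp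
    ring
  have hxrefl : refl2 x = x := by
    simp [refl2, hxdiag.symm, Prod.ext_iff]
  -- affine basis
  have hcard : Fintype.card (Fin 3) = Module.finrank ℝ (ℝ × ℝ) + 1 := by
    simp
  have htop : affineSpan ℝ (Set.range p) = ⊤ :=
    hindep.affineSpan_eq_top_iff_card_eq_finrank_add_one.mpr hcard
  let B : AffineBasis (Fin 3) ℝ (ℝ × ℝ) := ⟨p, hindep, htop⟩
  have hBp : ⇑B = p := rfl
  have hxint : x ∈ interior (convexHull ℝ ({P₁, P₂, Q} : Set (ℝ × ℝ))) := by
    have hrange : Set.range ⇑B = ({P₁, P₂, Q} : Set (ℝ × ℝ)) := by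
      rw [hBp, hp]
      ext y
      simp only [hp, Matrix.range_cons, Matrix.range_empty, Set.union_empty,
        Set.union_singleton, Set.mem_insert_iff, Set.mem_singleton_iff, Set.mem_union]
      tauto
    rw [← hrange, B.interior_convexHull]
    intro i
    rw [hx, ← hBp, B.coord_apply_combination_of_mem (Finset.mem_univ i) hwsum]
    exact hwpos i
  -- refl2 is linear and a homeomorphism
  have hlin : IsLinearMap ℝ refl2 := ⟨fun _ _ => rfl, fun _ _ => rfl⟩
  have himg : ({refl2 P₁, refl2 P₂, refl2 Q} : Set (ℝ × ℝ)) =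
      refl2 '' ({P₁, P₂, Q} : Set (ℝ × ℝ)) := by
    simp [Set.image_insert_eq]
  have hxint2 : x ∈ interior (convexHull ℝ
      ({refl2 P₁, refl2 P₂, refl2 Q} : Set (ℝ × ℝ))) := by
    rw [himg, ← hlin.image_convexHull]
    have h2 : refl2 '' interior ((convexHull ℝ) ({P₁, P₂, Q} : Set (ℝ × ℝ))) =
        interior (refl2 '' (convexHull ℝ) ({P₁, P₂, Q} : Set (ℝ × ℝ))) :=
      (Homeomorph.prodComm ℝ ℝ).image_interior _
    rw [← h2]
    exact ⟨x, hxint, hxrefl⟩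
  exact ⟨x, hxint, hxint2⟩
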